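/- Let S be a real symmetric positive definite n×n matrix. Let λ_min and λ_max be its smallest and largest eigenvalues, let λ* ∈ {λ_min, λ_max} be one with ℓ(λ*) = min(ℓ(λ_min), ℓ(λ_max)), and let d* be a unit eigenvector of S for λ*. Then Σ*_1 = I_n + (λ* − 1) d* (d*)ᵀ minimizes D' over L_{n,1}: for every Σ ∈ L_{n,1}, D'(Σ*_1) ≤ D'(Σ). -/

import Mathlib

/-!
For a unit vector `d` and `a > 0`, `Σ = I + (a - 1) d dᵀ` has `det Σ = a` and
`Σ⁻¹ = I + (a⁻¹ - 1) d dᵀ`, so `D'(Σ) = tr S + log a + (a⁻¹ - 1) q` with `q = dᵀ S d`.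
Since `log (q / a) ≤ q / a - 1`, this is at least `tr S + ℓ(q)`, with equality at `a = q`.
The Rayleigh quotient `q` lies in `[λ_min, λ_max] ⊆ (0, ∞)`, where `ℓ` is concave, so
`ℓ(q) ≥ min (ℓ λ_min) (ℓ λ_max) = ℓ λ*`; and `D'(Σ*₁) = tr S + ℓ λ*` because `d*` is an
eigenvector for `λ*`.
-/

open Matrix

noncomputable def ell (x : ℝ) : ℝ := Real.log x - x + 1

noncomputable def Dp {n : ℕ} (S A : Matrix (Fin n) (Fin n) ℝ) : ℝ :=
  Real.log A.det + (S * A⁻¹).trace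

def Lnk (n k : ℕ) : Set (Matrix (Fin n) (Fin n) ℝ) :=
  {M | ∃ (α : Fin k → ℝ) (d : Fin k → Fin n → ℝ),
    (∀ i, 0 < α i) ∧ (∀ i j, d i ⬝ᵥ d j = if i = j then (1 : ℝ) else 0) ∧
    M = 1 + ∑ i, (α i - 1) • Matrix.vecMulVec (d i) (d i)}

open Set Real

lemma concaveOn_ell : ConcaveOn ℝ (Ioi 0) ell := by
  unfold ell
  exact (strictConcaveOn_log_Ioi.concaveOn.sub (convexOn_id (convex_Ioi 0))).add_const 1

lemma ell_le_log_add_inv_sub_one_mul {a q : ℝ} (ha : 0 < a) (hq : 0 < q) :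
    ell q ≤ log a + (a⁻¹ - 1) * q := by
  have h := log_le_sub_one_of_pos (div_pos hq ha)
  rw [log_div hq.ne' ha.ne'] at h
  have hqa : q / a = a⁻¹ * q := by field_simp
  unfold ell
  linarith

lemma log_add_inv_sub_one_mul_self {x : ℝ} (hx : x ≠ 0) : log x + (x⁻¹ - 1) * x = ell x := by
  unfold ell
  field_simp
  ring

section RankOne

variable {ι K : Type*} [Fintype ι] [DecidableEq ι]

lemma det_one_add_smul_vecMulVec [CommRing K] (c : K) (u v : ι → K) :
    (1 + c • vecMulVec u v).det = 1 + c * (v ⬝ᵥ u) := by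
  rw [← smul_vecMulVec, vecMulVec_eq Unit, det_one_add_replicateCol_mul_replicateRow,
    dotProduct_smul, smul_eq_mul]

lemma inv_one_add_smul_vecMulVec_self [Field K] {a : K} (ha : a ≠ 0) {d : ι → K}
    (hd : d ⬝ᵥ d = 1) :
    (1 + (a - 1) • vecMulVec d d)⁻¹ = 1 + (a⁻¹ - 1) • vecMulVec d d := by
  have hP : vecMulVec d d * vecMulVec d d = vecMulVec d d := by
    rw [vecMulVec_mul_vecMulVec, hd, one_smul]
  have hcoeff : (a - 1) + (a⁻¹ - 1) + (a⁻¹ - 1) * (a - 1) = 0 := by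
    field_simp
    ring
  apply inv_eq_right_inv
  calc (1 + (a - 1) • vecMulVec d d) * (1 + (a⁻¹ - 1) • vecMulVec d d)
      = 1 + ((a - 1) + (a⁻¹ - 1) + (a⁻¹ - 1) * (a - 1)) • vecMulVec d d := by
        simp only [add_mul, mul_add, one_mul, mul_one, Matrix.smul_mul, Matrix.mul_smul, hP,
          smul_smul, add_smul]
        abel
    _ = 1 := by rw [hcoeff, zero_smul, add_zero]

lemma trace_mul_one_add_smul_vecMulVec_self [CommRing K] (S : Matrix ι ι K) (c : K)
    (d : ι → K) :
    (S * (1 + c • vecMulVec d d)).trace = S.trace + c * (d ⬝ᵥ (S *ᵥ d)) := by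
  rw [mul_add, mul_one, trace_add, Matrix.mul_smul, trace_smul, mul_vecMulVec, trace_vecMulVec,
    dotProduct_comm, smul_eq_mul]

end RankOne

lemma Dp_one_add_smul_vecMulVec_self {n : ℕ} (S : Matrix (Fin n) (Fin n) ℝ) {a : ℝ}
    (ha : 0 < a) {d : Fin n → ℝ} (hd : d ⬝ᵥ d = 1) :
    Dp S (1 + (a - 1) • vecMulVec d d) =
      S.trace + (log a + (a⁻¹ - 1) * (d ⬝ᵥ (S *ᵥ d))) := by
  rw [Dp, det_one_add_smul_vecMulVec, hd, inv_one_add_smul_vecMulVec_self ha.ne' hd,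
    trace_mul_one_add_smul_vecMulVec_self]
  ring_nf

lemma exists_of_mem_Lnk_one {n : ℕ} {M : Matrix (Fin n) (Fin n) ℝ} (hM : M ∈ Lnk n 1) :
    ∃ (a : ℝ) (d : Fin n → ℝ), 0 < a ∧ d ⬝ᵥ d = 1 ∧
      M = 1 + (a - 1) • vecMulVec d d := by
  obtain ⟨α, d, hα, hd, rfl⟩ := hM
  exact ⟨α 0, d 0, hα 0, by simpa using hd 0 0, by rw [Fin.sum_univ_one]⟩

section Eigen

variable {ι : Type*} [Fintype ι]

lemma Matrix.PosDef.pos_of_mulVec_eq_smul {S : Matrix ι ι ℝ} (hS : S.PosDef) {μ : ℝ}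
    {w : ι → ℝ} (hw : w ≠ 0) (hSw : S *ᵥ w = μ • w) : 0 < μ := by
  have hpos := hS.dotProduct_mulVec_pos hw
  rw [star_trivial, hSw, dotProduct_smul, smul_eq_mul] at hpos
  exact pos_of_mul_pos_left hpos (dotProduct_self_star_nonneg w)

lemma Matrix.IsHermitian.mul_dotProduct_self_le [DecidableEq ι] {A : Matrix ι ι ℝ}
    (hA : A.IsHermitian) {c : ℝ}
    (hc : ∀ μ : ℝ, (∃ w : ι → ℝ, w ≠ 0 ∧ A *ᵥ w = μ • w) → c ≤ μ) (v : ι → ℝ) :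
    c * (v ⬝ᵥ v) ≤ v ⬝ᵥ (A *ᵥ v) := by
  have hB : (A - c • 1).IsHermitian := hA.sub (isHermitian_one.smul (IsSelfAdjoint.all c))
  have hpsd : (A - c • 1).PosSemidef := hB.posSemidef_iff_eigenvalues_nonneg.2 fun i ↦ by
    let b : ι → ℝ := hB.eigenvectorBasis i
    have hb : b ≠ 0 := fun h ↦
      hB.eigenvectorBasis.orthonormal.ne_zero i (by ext j; exact congrFun h j)
    have hAb : A *ᵥ b = (hB.eigenvalues i + c) • b := by
      have hBb := hB.mulVec_eigenvectorBasis i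
      rw [sub_mulVec, smul_mulVec, one_mulVec, sub_eq_iff_eq_add] at hBb
      rw [hBb, add_smul]
    have := hc _ ⟨b, hb, hAb⟩
    simp only [Pi.zero_apply]
    linarith
  have hv := hpsd.dotProduct_mulVec_nonneg v
  rw [star_trivial, sub_mulVec, smul_mulVec, one_mulVec, dotProduct_sub, dotProduct_smul,
    smul_eq_mul] at hv
  linarith

lemma Matrix.IsHermitian.dotProduct_mulVec_mem_Icc [DecidableEq ι] {S : Matrix ι ι ℝ}
    (hS : S.IsHermitian) {lo hi : ℝ}
    (hbounds : ∀ μ : ℝ, (∃ w : ι → ℝ, w ≠ 0 ∧ S *ᵥ w = μ • w) → lo ≤ μ ∧ μ ≤ hi)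
    {v : ι → ℝ} (hv : v ⬝ᵥ v = 1) : v ⬝ᵥ (S *ᵥ v) ∈ Icc lo hi := by
  have hlo := hS.mul_dotProduct_self_le (fun μ hμ ↦ (hbounds μ hμ).1) v
  -- the upper bound is the lower bound for `-S`
  have hhi := hS.neg.mul_dotProduct_self_le (c := -hi) (fun μ ⟨w, hw, hSw⟩ ↦ by
    have := (hbounds (-μ) ⟨w, hw, by rw [neg_smul, ← hSw, neg_mulVec, neg_neg]⟩).2
    linarith) v
  rw [neg_mulVec, dotProduct_neg, hv] at hhi
  rw [hv] at hlo
  constructor <;> linarith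

end Eigen

theorem stmt_3_general {n : ℕ} (S : Matrix (Fin n) (Fin n) ℝ) (hS : S.PosDef)
    (lammin lammax lamstar : ℝ) (dstar : Fin n → ℝ)
    (hminEig : ∃ w : Fin n → ℝ, w ≠ 0 ∧ S *ᵥ w = lammin • w)
    (hbounds : ∀ μ : ℝ, (∃ w : Fin n → ℝ, w ≠ 0 ∧ S *ᵥ w = μ • w) →
      lammin ≤ μ ∧ μ ≤ lammax)
    (hstarmin : ell lamstar = min (ell lammin) (ell lammax))
    (hd : S *ᵥ dstar = lamstar • dstar) (hdnorm : dstar ⬝ᵥ dstar = 1) :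
    ∀ M ∈ Lnk n 1,
      Dp S (1 + (lamstar - 1) • Matrix.vecMulVec dstar dstar) ≤ Dp S M := by
  intro M hM
  obtain ⟨a, v, ha, hv, rfl⟩ := exists_of_mem_Lnk_one hM
  have hstar_pos : 0 < lamstar :=
    hS.pos_of_mulVec_eq_smul (by rintro rfl; simp at hdnorm) hd
  have hmin_pos : 0 < lammin := by
    obtain ⟨w, hw, hSw⟩ := hminEig
    exact hS.pos_of_mulVec_eq_smul hw hSw
  have hq := hS.1.dotProduct_mulVec_mem_Icc hbounds hv
  have hq_pos : 0 < v ⬝ᵥ (S *ᵥ v) := hmin_pos.trans_le hq.1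
  rw [Dp_one_add_smul_vecMulVec_self S hstar_pos hdnorm, Dp_one_add_smul_vecMulVec_self S ha hv,
    hd, dotProduct_smul, hdnorm, smul_eq_mul, mul_one,
    log_add_inv_sub_one_mul_self hstar_pos.ne']
  gcongr
  calc ell lamstar ≤ ell (v ⬝ᵥ (S *ᵥ v)) := hstarmin ▸
        concaveOn_ell.min_le_of_mem_Icc hmin_pos (hmin_pos.trans_le (hq.1.trans hq.2)) hq
    _ ≤ log a + (a⁻¹ - 1) * (v ⬝ᵥ (S *ᵥ v)) := ell_le_log_add_inv_sub_one_mul ha hq_pos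

theorem stmt_3 {n : ℕ} (S : Matrix (Fin n) (Fin n) ℝ) (hS : S.PosDef)
    (lammin lammax lamstar : ℝ) (dstar : Fin n → ℝ)
    (hminEig : ∃ w : Fin n → ℝ, w ≠ 0 ∧ S *ᵥ w = lammin • w)
    (hmaxEig : ∃ w : Fin n → ℝ, w ≠ 0 ∧ S *ᵥ w = lammax • w)
    (hbounds : ∀ μ : ℝ, (∃ w : Fin n → ℝ, w ≠ 0 ∧ S *ᵥ w = μ • w) →
      lammin ≤ μ ∧ μ ≤ lammax)
    (hstar : lamstar = lammin ∨ lamstar = lammax)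
    (hstarmin : ell lamstar = min (ell lammin) (ell lammax))
    (hd : S *ᵥ dstar = lamstar • dstar) (hdnorm : dstar ⬝ᵥ dstar = 1) :
    ∀ M ∈ Lnk n 1,
      Dp S (1 + (lamstar - 1) • Matrix.vecMulVec dstar dstar) ≤ Dp S M :=
  stmt_3_general S hS lammin lammax lamstar dstar hminEig hbounds hstarmin hd hdnorm
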